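/- Let N be a positive integer, T a positive real number, and for m = 0,…,N−1 define the discrete chirp ψ_m ∈ ℂ^N by ψ_m[n] = √(T/N)·exp(i·π/4)·exp(−i·π·(n−m)²/N) for n = 0,…,N−1. Then for all m₁, m₂ in {0,…,N−1}, Σ_{n=0}^{N−1} conj(ψ_{m₁}[n])·ψ_{m₂}[n] equals T if m₁ = m₂ and equals 0 otherwise. -/

import Mathlib

open Complex Real Finset

/-- The m-th discrete chirp of an N-chirp OCDM system with symbol duration T:
ψ_m[n] = √(T/N)·exp(i·π/4)·exp(−i·π·(n−m)²/N). -/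
noncomputable def discreteChirp (N : ℕ) (T : ℝ) (m n : Fin N) : ℂ :=
  (Real.sqrt (T / N) : ℂ) * Complex.exp ((Real.pi / 4) * Complex.I) *
    Complex.exp (-(Real.pi * Complex.I * (((n : ℕ) : ℤ) - ((m : ℕ) : ℤ)) ^ 2 / N))

/-!
Since (n - m₁)² - (n - m₂)² = (m₂ - m₁)(2n - m₁ - m₂) is affine in n, the product
conj ψ_{m₁}[n] · ψ_{m₂}[n] is T/N times a constant times zⁿ with z = exp(2πi(m₂ - m₁)/N).
This z is an N-th root of unity, equal to 1 exactly when N ∣ m₂ - m₁, i.e. when m₁ = m₂;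
otherwise the geometric sum of its powers over a full period vanishes.
-/

open ComplexConjugate

lemma geom_sum_eq_zero_of_pow_eq_one {R : Type*} [CommRing R] [IsDomain R] {z : R} {N : ℕ}
    (hz : z ≠ 1) (hzN : z ^ N = 1) : ∑ i ∈ range N, z ^ i = 0 := by
  have h : (1 - z) * ∑ i ∈ range N, z ^ i = 0 := by rw [mul_neg_geom_sum, hzN, sub_self]
  exact (mul_eq_zero.mp h).resolve_left (sub_ne_zero.mpr hz.symm)

lemma sum_range_exp_two_pi_mul_I_mul_div_pow_eq_zero {N : ℕ} {d : ℤ} (hd : ¬ (N : ℤ) ∣ d) :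
    ∑ n ∈ range N, cexp (2 * π * I * d / N) ^ n = 0 := by
  obtain rfl | hN := eq_or_ne N 0
  · simp
  have hζ := isPrimitiveRoot_exp N hN
  have hz : cexp (2 * π * I * d / N) = cexp (2 * π * I / N) ^ d := by
    rw [← exp_int_mul]
    congr 1
    ring
  rw [hz]
  refine geom_sum_eq_zero_of_pow_eq_one ((hζ.zpow_eq_one_iff_dvd d).not.mpr hd) ?_
  rw [← zpow_natCast, ← zpow_mul, mul_comm d, zpow_mul, zpow_natCast, hζ.pow_eq_one, one_zpow]

lemma Fin.not_natCast_dvd_sub_of_ne {N : ℕ} {a b : Fin N} (h : a ≠ b) :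
    ¬ (N : ℤ) ∣ ((b : ℕ) : ℤ) - (a : ℕ) := by
  intro hdvd
  have := Int.eq_zero_of_abs_lt_dvd hdvd (by rw [abs_lt]; omega)
  exact h (Fin.ext (by omega))

lemma conj_discreteChirp_mul_discreteChirp {N : ℕ} {T : ℝ} (hT : 0 ≤ T) (m₁ m₂ n : Fin N) :
    conj (discreteChirp N T m₁ n) * discreteChirp N T m₂ n =
      (T / N : ℂ) * cexp (-(π * I * ((((m₂ : ℕ) : ℤ) - (m₁ : ℕ) : ℤ) : ℂ) * ((m₁ : ℕ) + (m₂ : ℕ)) / N)) *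
        cexp (2 * π * I * ((((m₂ : ℕ) : ℤ) - (m₁ : ℕ) : ℤ) : ℂ) / N) ^ (n : ℕ) := by
  have hs : (√(T / N) : ℂ) * √(T / N) = T / N := by
    rw [← ofReal_mul, Real.mul_self_sqrt (by positivity)]; push_cast; rfl
  have hcomb : ∀ s a b c e : ℂ,
      s * cexp a * cexp b * (s * cexp c * cexp e) = s * s * cexp (a + b + c + e) := by
    intros; simp only [Complex.exp_add]; ring
  simp only [discreteChirp, map_mul, ← exp_conj, conj_ofReal, map_div₀, map_neg, map_pow,
    map_sub, map_intCast, conj_I, map_natCast, map_ofNat, ← Complex.exp_nat_mul]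
  rw [hcomb, hs, mul_assoc ((T : ℂ) / N), ← Complex.exp_add]
  congr 2
  push_cast
  field_simp
  ring

theorem stmt16_general (N : ℕ) (T : ℝ) (hT : 0 < T) (m₁ m₂ : Fin N) :
    ∑ n : Fin N, (starRingEnd ℂ) (discreteChirp N T m₁ n) * discreteChirp N T m₂ n =
      if m₁ = m₂ then (T : ℂ) else 0 := by
  simp_rw [conj_discreteChirp_mul_discreteChirp hT.le, ← mul_sum]
  rw [Fin.sum_univ_eq_sum_range (fun n => cexp _ ^ n)]
  split_ifs with h
  · subst h
    have hN : (N : ℂ) ≠ 0 := Nat.cast_ne_zero.mpr m₁.pos.ne'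
    simp only [sub_self, Int.cast_zero, mul_zero, zero_mul, zero_div, neg_zero, Complex.exp_zero,
      mul_one, one_pow, sum_const, card_range, nsmul_eq_mul]
    field_simp
  · rw [sum_range_exp_two_pi_mul_I_mul_div_pow_eq_zero (Fin.not_natCast_dvd_sub_of_ne h), mul_zero]

theorem stmt16 (N : ℕ) (hN : 0 < N) (T : ℝ) (hT : 0 < T) (m₁ m₂ : Fin N) :
    ∑ n : Fin N, (starRingEnd ℂ) (discreteChirp N T m₁ n) * discreteChirp N T m₂ n =
      if m₁ = m₂ then (T : ℂ) else 0 :=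
  stmt16_general N T hT m₁ m₂
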